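/- Let G be a lattice of languages over a finite alphabet A and let τ : 2^{A*} → Q be a nice rating map. Let S = {s ∈ Q | the language {ε} is not G-separable from {w ∈ A* | τ({w}) = s}}. Then for every optimal G-approximation L₀ for τ, one has τ(L₀) = Σ_{s ∈ S} s (the sum of the finite set S in the commutative idempotent monoid (Q,+), with empty sum 0_Q). -/

import Mathlib

open Pointwise

namespace StarFreePaper

variable {A : Type}

/-- Languages over the alphabet `A`: sets of words, i.e. elements of the free monoid. -/
abbrev Lang (A : Type) : Type := Set (FreeMonoid A)

/-- Concatenation of languages. -/
def Lcat (K L : Lang A) : Lang A := {w | ∃ u ∈ K, ∃ v ∈ L, w = u * v}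

/-- Kleene star of a language. -/
def Lstar (K : Lang A) : Lang A :=
  {w | ∃ l : List (FreeMonoid A), (∀ u ∈ l, u ∈ K) ∧ w = l.prod}

/-- `K⁺`: nonempty products of words of `K`. -/
def Lplus (K : Lang A) : Lang A :=
  {w | ∃ l : List (FreeMonoid A), l ≠ [] ∧ (∀ u ∈ l, u ∈ K) ∧ w = l.prod}

/-- `K^d`: products of exactly `d` words of `K`. -/
def Lpow (K : Lang A) (d : ℕ) : Lang A :=
  {w | ∃ l : List (FreeMonoid A), l.length = d ∧ (∀ u ∈ l, u ∈ K) ∧ w = l.prod}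

/-- Left quotient `u⁻¹L`. -/
def LeftQuot (u : FreeMonoid A) (L : Lang A) : Lang A := {w | u * w ∈ L}

/-- Right quotient `Lu⁻¹`. -/
def RightQuot (u : FreeMonoid A) (L : Lang A) : Lang A := {w | w * u ∈ L}

/-- A bundled morphism from the free monoid over `A` into a finite monoid. -/
structure FinMonRec (A : Type) : Type 1 where
  M : Type
  [mon : Monoid M]
  [fin : Finite M]
  φ : FreeMonoid A →* M

attribute [instance] FinMonRec.mon FinMonRec.fin

/-- A bundled morphism from the free monoid over `A` into a finite group. -/
structure FinGrpRec (A : Type) : Type 1 where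
  G : Type
  [grp : Group G]
  [fin : Finite G]
  φ : FreeMonoid A →* G

attribute [instance] FinGrpRec.grp FinGrpRec.fin

/-- A morphism recognizes `L` when `L` is the preimage of some subset. -/
def Recognizes {M : Type} [Monoid M] (φ : FreeMonoid A →* M) (L : Lang A) : Prop :=
  ∃ F : Set M, L = φ ⁻¹' F

/-- A language is regular when it is recognized by a morphism into a finite monoid. -/
def IsRegular (L : Lang A) : Prop := ∃ r : FinMonRec A, Recognizes r.φ L

/-- A language is a group language when it is recognized by a morphism into a finite group. -/
def IsGroupLang (L : Lang A) : Prop := ∃ r : FinGrpRec A, Recognizes r.φ L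

/-- Prevariety: class of regular languages containing `∅` and `A*`, closed under finite
union, finite intersection, complement and left/right quotients by words. -/
def IsPrevariety (C : Set (Lang A)) : Prop :=
  (∀ L ∈ C, IsRegular L) ∧ (∅ : Lang A) ∈ C ∧ (Set.univ : Lang A) ∈ C ∧
    (∀ K ∈ C, ∀ L ∈ C, K ∪ L ∈ C) ∧ (∀ K ∈ C, ∀ L ∈ C, K ∩ L ∈ C) ∧
    (∀ L ∈ C, Lᶜ ∈ C) ∧
    (∀ L ∈ C, ∀ u : FreeMonoid A, LeftQuot u L ∈ C) ∧
    (∀ L ∈ C, ∀ u : FreeMonoid A, RightQuot u L ∈ C)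

/-- A group prevariety: a prevariety consisting of group languages. -/
def IsGroupPrevariety (G : Set (Lang A)) : Prop :=
  IsPrevariety G ∧ ∀ L ∈ G, IsGroupLang L

/-- Lattice of languages: contains `∅`, `A*`, closed under finite unions/intersections. -/
def IsLatticeClass (C : Set (Lang A)) : Prop :=
  (∅ : Lang A) ∈ C ∧ (Set.univ : Lang A) ∈ C ∧
    (∀ K ∈ C, ∀ L ∈ C, K ∪ L ∈ C) ∧ (∀ K ∈ C, ∀ L ∈ C, K ∩ L ∈ C)

/-- Star-free closure of a class `C`: the least class containing `C` and the singletons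
`{a}` for letters `a`, closed under union, complement and concatenation. -/
inductive SF (C : Set (Lang A)) : Lang A → Prop
  | base {L : Lang A} : L ∈ C → SF C L
  | letter (a : A) : SF C {FreeMonoid.of a}
  | union {K L : Lang A} : SF C K → SF C L → SF C (K ∪ L)
  | compl {L : Lang A} : SF C L → SF C Lᶜ
  | cat {K L : Lang A} : SF C K → SF C L → SF C (Lcat K L)

/-- Prefix code: `ε ∉ K` and no word of `K` is a strict prefix of another word of `K`. -/
def IsPrefixCode (K : Lang A) : Prop :=
  (1 : FreeMonoid A) ∉ K ∧ ∀ u ∈ K, ∀ x : FreeMonoid A, x ≠ 1 → u * x ∉ K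

/-- `K` has synchronization delay `d`. -/
def HasSyncDelay (K : Lang A) (d : ℕ) : Prop :=
  ∀ u v w : FreeMonoid A, u * v * w ∈ Lplus K → v ∈ Lpow K d → u * v ∈ Lplus K

/-- Bounded synchronization delay. -/
def BoundedSyncDelay (K : Lang A) : Prop := ∃ d, 1 ≤ d ∧ HasSyncDelay K d

/-- Unambiguous concatenation. -/
def Unambiguous (K L : Lang A) : Prop :=
  ∀ u u' v v' : FreeMonoid A,
    u ∈ K → u' ∈ K → v ∈ L → v' ∈ L → u * v = u' * v' → u = u' ∧ v = v'

/-- `SD C`: least class containing `∅` and the singletons `{a}`, closed under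
intersection with languages of `C`, disjoint union, unambiguous concatenation, and
Kleene star applied to prefix codes of bounded synchronization delay. -/
inductive SD (C : Set (Lang A)) : Lang A → Prop
  | empty : SD C ∅
  | letter (a : A) : SD C {FreeMonoid.of a}
  | inter {K : Lang A} (L : Lang A) : SD C K → L ∈ C → SD C (K ∩ L)
  | dunion {K L : Lang A} : SD C K → SD C L → K ∩ L = ∅ → SD C (K ∪ L)
  | ucat {K L : Lang A} : SD C K → SD C L → Unambiguous K L → SD C (Lcat K L)
  | star {K : Lang A} : SD C K → IsPrefixCode K → BoundedSyncDelay K → SD C (Lstar K)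

/-- `K` separates `L₁` from `L₂`. -/
def Separates (K L₁ L₂ : Lang A) : Prop := L₁ ⊆ K ∧ K ∩ L₂ = ∅

/-- `L₁` is `C`-separable from `L₂`. -/
def Separable (C : Set (Lang A)) (L₁ L₂ : Lang A) : Prop := ∃ K ∈ C, Separates K L₁ L₂

/-- A `C`-morphism: a surjective morphism whose recognized languages all belong to `C`. -/
def IsCMorphism {M : Type} [Monoid M] (C : Set (Lang A)) (φ : FreeMonoid A →* M) : Prop :=
  Function.Surjective φ ∧ ∀ F : Set M, φ ⁻¹' F ∈ C

/-- `(s,t)` is a `C`-pair for `φ`. -/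
def CPair {M : Type} [Monoid M] (C : Set (Lang A)) (φ : FreeMonoid A →* M) (s t : M) : Prop :=
  ¬ Separable C (φ ⁻¹' {s}) (φ ⁻¹' {t})

/-- The `C`-orbit of an idempotent `e` for `φ`. -/
def COrbit {M : Type} [Monoid M] (C : Set (Lang A)) (φ : FreeMonoid A →* M) (e : M) :
    Set M :=
  {r | ∃ s : M, CPair C φ e s ∧ r = e * s * e}

/-- The `G`-kernel of `φ`. -/
def GKernel {M : Type} [Monoid M] (G : Set (Lang A)) (φ : FreeMonoid A →* M) : Set M :=
  {s | ¬ Separable G {(1 : FreeMonoid A)} (φ ⁻¹' {s})}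

/-- The syntactic congruence of a language `L`. -/
def SynCon (L : Lang A) : Con (FreeMonoid A) where
  r u v := ∀ x y : FreeMonoid A, x * u * y ∈ L ↔ x * v * y ∈ L
  iseqv :=
    ⟨fun _ _ _ => Iff.rfl, fun h x y => (h x y).symm, fun h h' x y => (h x y).trans (h' x y)⟩
  mul' := by
    intro u v u' v' h h' x y
    have h1 := h' (x * u) y
    have h2 := h x (v' * y)
    simp only [mul_assoc] at h1 h2 ⊢
    exact h1.trans h2

/-- The syntactic monoid of `L`. -/
abbrev SynMon (L : Lang A) : Type := (SynCon L).Quotient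

/-- The syntactic morphism of `L`. -/
def SynMorphism (L : Lang A) : FreeMonoid A →* SynMon L := (SynCon L).mk'

/-- A subset of a monoid is aperiodic when each of its elements `r` satisfies
`r ^ (n+1) = r ^ n` for some `n ≥ 1`. -/
def IsAperiodicSet {M : Type} [Monoid M] (S : Set M) : Prop :=
  ∀ r ∈ S, ∃ n, 1 ≤ n ∧ r ^ (n + 1) = r ^ n

/-- `Ks` is a (finite) cover of `L`. -/
def IsCoverOf (Ks : Set (Lang A)) (L : Lang A) : Prop := Ks.Finite ∧ L ⊆ ⋃₀ Ks

/-- `Ks` is separating for `Ls`. -/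
def SeparatingFor (Ks Ls : Set (Lang A)) : Prop := ∀ K ∈ Ks, ∃ L ∈ Ls, K ∩ L = ∅

/-- The pair `(L₁, Ls)` is `C`-coverable. -/
def Coverable (C : Set (Lang A)) (L₁ : Lang A) (Ls : Set (Lang A)) : Prop :=
  ∃ Ks : Set (Lang A), IsCoverOf Ks L₁ ∧ (∀ K ∈ Ks, K ∈ C) ∧ SeparatingFor Ks Ls

/-- Rating map into a commutative idempotent monoid `(R, +)`. -/
def IsRatingMap {R : Type} [AddCommMonoid R] (ρ : Lang A → R) : Prop :=
  ρ ∅ = 0 ∧ ∀ K L : Lang A, ρ (K ∪ L) = ρ K + ρ L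

/-- Multiplicative rating map (into an idempotent semiring). -/
def IsMultRM {R : Type} [Semiring R] (ρ : Lang A → R) : Prop :=
  IsRatingMap ρ ∧ ρ {(1 : FreeMonoid A)} = 1 ∧ ∀ K L : Lang A, ρ (Lcat K L) = ρ K * ρ L

/-- Nice rating map: every value is attained on a finite sublanguage. -/
def IsNiceRM {R : Type} [AddCommMonoid R] (ρ : Lang A → R) : Prop :=
  ∀ K : Lang A, ∃ F : Lang A, F.Finite ∧ F ⊆ K ∧ ρ K = ρ F

/-- Optimal `ρ`-imprint on `L` for `D` (intersection of imprints of all `D`-covers of `L`,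
using the canonical order `r ≤ s ↔ r + s = s`). -/
def optImprint {R : Type} [AddCommMonoid R] (D : Set (Lang A)) (L : Lang A)
    (ρ : Lang A → R) : Set R :=
  {r | ∀ Ks : Set (Lang A), Ks.Finite → (∀ K ∈ Ks, K ∈ D) → L ⊆ ⋃₀ Ks →
    ∃ K ∈ Ks, r + ρ K = ρ K}

/-- `η`-pointed optimal `ρ`-imprint for `D`. -/
def pointedOptImprint {N R : Type} [Monoid N] [AddCommMonoid R] (D : Set (Lang A))
    (η : FreeMonoid A →* N) (ρ : Lang A → R) : Set (N × R) :=
  {p | p.2 ∈ optImprint D (η ⁻¹' {p.1}) ρ}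

/-- `S ⊆ N × R` is SF-saturated for `η` and `ρ`. -/
def SFSaturated {N R : Type} [Monoid N] [Semiring R] (η : FreeMonoid A →* N)
    (ρ : Lang A → R) (S : Set (N × R)) : Prop :=
  (∀ w : FreeMonoid A, (η w, ρ {w}) ∈ S) ∧
  (∀ t r, (t, r) ∈ S → ∀ q, q + r = r → (t, q) ∈ S) ∧
  (∀ s q t r, (s, q) ∈ S → (t, r) ∈ S → (s * t, q * r) ∈ S) ∧
  (∀ e r, (e, r) ∈ S → e * e = e → ∀ n, 1 ≤ n → r ^ n * r ^ n = r ^ n →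
    (e, r ^ n + r ^ (n + 1)) ∈ S)

/-- `L₀` is an optimal `G`-approximation for `τ` (w.r.t. the given canonical order `le`):
a language of `G` containing `ε` whose image is minimal among all such languages. -/
def OptApprox {Q : Type} (G : Set (Lang A)) (le : Q → Q → Prop) (τ : Lang A → Q)
    (L₀ : Lang A) : Prop :=
  L₀ ∈ G ∧ (1 : FreeMonoid A) ∈ L₀ ∧ ∀ L' ∈ G, (1 : FreeMonoid A) ∈ L' → le (τ L₀) (τ L')

/-- The set `X_a = {s · ρ(a) · s' | s, s' ∈ S}`. -/
def muX {R : Type} [Semiring R] (ρ : Lang A → R) (S : Set R) (a : A) : Set R :=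
  {x | ∃ s ∈ S, ∃ s' ∈ S, x = s * ρ {FreeMonoid.of a} * s'}

/-- `μ_*(a₁⋯aₙ) = X_{a₁} ⋯ X_{aₙ}` (pointwise product of sets; `μ_*(ε) = {1}`). -/
def muStar {R : Type} [Semiring R] (ρ : Lang A → R) (S : Set R) (w : FreeMonoid A) :
    Set R :=
  ((FreeMonoid.toList w).map (muX ρ S)).prod

/-- The nice multiplicative rating map `μ_{ρ,S}`. -/
def mu {R : Type} [Semiring R] (ρ : Lang A → R) (S : Set R) (K : Lang A) : Set R :=
  ⋃ w ∈ K, muStar ρ S w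

/-- `S ⊆ R` is SF-complete for `G` and `ρ`. -/
def SFComplete {R : Type} [Semiring R] (G : Set (Lang A)) (ρ : Lang A → R) (S : Set R) :
    Prop :=
  (∀ r ∈ S, ∀ q, q + r = r → q ∈ S) ∧
  (∀ q ∈ S, ∀ r ∈ S, q * r ∈ S) ∧
  (∀ L₀ : Lang A, OptApprox G (· ⊆ ·) (mu ρ S) L₀ → mu ρ S L₀ ⊆ S) ∧
  (∀ r ∈ S, ∀ n, 1 ≤ n → r ^ n * r ^ n = r ^ n → r ^ n + r ^ (n + 1) ∈ S)

end StarFreePaper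

open StarFreePaper

section Aux

lemma sum_le_aux {Q : Type} [AddCommMonoid Q] {ι : Type} (t : Finset ι) (f : ι → Q) (r : Q)
    (h : ∀ x ∈ t, f x + r = r) : (∑ x ∈ t, f x) + r = r := by
  classical
  induction t using Finset.induction_on with
  | empty => simp
  | insert a s ha ih =>
    rw [Finset.sum_insert ha, add_assoc, ih fun x hx => h x (Finset.mem_insert_of_mem hx),
      h a (Finset.mem_insert_self a s)]

lemma mem_le_sum_aux {Q : Type} [AddCommMonoid Q] (hidem : ∀ q : Q, q + q = q)
    (t : Finset Q) {s : Q} (hs : s ∈ t) : s + ∑ x ∈ t, x = ∑ x ∈ t, x := by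
  classical
  rw [← Finset.add_sum_erase t (fun x => x) hs, ← add_assoc]
  simp [hidem s]

lemma rating_sum_aux {A : Type} {Q : Type} [AddCommMonoid Q] (τ : StarFreePaper.Lang A → Q)
    (hτ0 : τ ∅ = 0) (hτadd : ∀ K L : StarFreePaper.Lang A, τ (K ∪ L) = τ K + τ L)
    (t : Finset (FreeMonoid A)) : τ ↑t = ∑ w ∈ t, τ {w} := by
  classical
  induction t using Finset.induction_on with
  | empty => simpa using hτ0
  | insert a s ha ih =>
    rw [Finset.sum_insert ha, Finset.coe_insert, Set.insert_eq, hτadd, ih]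

lemma inter_mem_aux {A : Type} {G : Set (StarFreePaper.Lang A)}
    (hG : StarFreePaper.IsLatticeClass G) {ι : Type} (K : ι → StarFreePaper.Lang A)
    (hK : ∀ i, K i ∈ G) (t : Finset ι) : (⋂ i ∈ t, K i) ∈ G := by
  classical
  induction t using Finset.induction_on with
  | empty => simpa using hG.2.1
  | insert a s ha ih =>
    rw [Finset.set_biInter_insert]
    exact hG.2.2.2 _ (hK a) _ ih

end Aux

/-- For a lattice `G` and a nice rating map `τ` into a finite
commutative idempotent monoid `Q`, the value of `τ` on any optimal `G`-approximation is
the sum of all `s ∈ Q` such that `{ε}` is not `G`-separable from `τ_*⁻¹(s)`. -/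
theorem statement17 {A : Type} [Fintype A] (G : Set (Lang A)) (hG : IsLatticeClass G)
    {Q : Type} [AddCommMonoid Q] [Finite Q] (hidem : ∀ q : Q, q + q = q)
    (τ : Lang A → Q) (hτ : IsRatingMap τ) (hnice : IsNiceRM τ)
    (L₀ : Lang A) (hL₀ : OptApprox G (fun q q' => q + q' = q') τ L₀) :
    τ L₀ =
      ∑ s ∈ (Set.toFinite
          {s : Q | ¬ Separable G {(1 : FreeMonoid A)}
            {w : FreeMonoid A | τ {w} = s}}).toFinset, s := by
  classical
  obtain ⟨hτ0, hτadd⟩ := hτ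
  obtain ⟨hL₀G, hεL₀, hopt⟩ := hL₀
  set S : Set Q := {s : Q | ¬ Separable G {(1 : FreeMonoid A)}
            {w : FreeMonoid A | τ {w} = s}} with hSdef
  set T : Finset Q := (Set.toFinite S).toFinset with hTdef
  have hterm : ∀ s ∈ T, s + τ L₀ = τ L₀ := by
    intro s hs
    rw [hTdef, Set.Finite.mem_toFinset] at hs
    by_cases hw : ∃ w, w ∈ L₀ ∧ τ {w} = s
    · obtain ⟨w, hwL, hws⟩ := hw
      have hu : ({w} : Lang A) ∪ L₀ = L₀ :=
        Set.union_eq_self_of_subset_left (Set.singleton_subset_iff.2 hwL)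
      calc s + τ L₀ = τ ({w} ∪ L₀) := by rw [hτadd, hws]
        _ = τ L₀ := by rw [hu]
    · exact absurd ⟨L₀, hL₀G, Set.singleton_subset_iff.2 hεL₀, by
        ext w
        simp only [Set.mem_inter_iff, Set.mem_setOf_eq, Set.mem_empty_iff_false, iff_false,
          not_and]
        exact fun hwL hws => hw ⟨w, hwL, hws⟩⟩ hs
  have h1 : (∑ s ∈ T, s) + τ L₀ = τ L₀ := sum_le_aux T (fun s => s) (τ L₀) hterm
  have hK : ∀ s : Q, ∃ K : Lang A, K ∈ G ∧ (1 : FreeMonoid A) ∈ K ∧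
      (s ∉ S → K ∩ {w : FreeMonoid A | τ {w} = s} = ∅) := by
    intro s
    by_cases hs : s ∈ S
    · exact ⟨Set.univ, hG.2.1, Set.mem_univ _, fun h => absurd hs h⟩
    · have : Separable G {(1 : FreeMonoid A)} {w : FreeMonoid A | τ {w} = s} := by
        by_contra h; exact hs h
      obtain ⟨K, hKG, hK1, hK2⟩ := this
      exact ⟨K, hKG, hK1 rfl, fun _ => hK2⟩
  choose K hKG hKε hKsep using hK
  have := Fintype.ofFinite Q
  set L' : Lang A := ⋂ s ∈ (Finset.univ : Finset Q), K s with hL'def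
  have hL'G : L' ∈ G := inter_mem_aux hG K hKG Finset.univ
  have hεL' : (1 : FreeMonoid A) ∈ L' := by
    rw [hL'def]
    exact Set.mem_biInter fun s _ => hKε s
  have hoptL' : τ L₀ + τ L' = τ L' := hopt L' hL'G hεL'
  obtain ⟨F, hFfin, hFsub, hFval⟩ := hnice L'
  have hFcoe : (hFfin.toFinset : Set (FreeMonoid A)) = F := hFfin.coe_toFinset
  have hτF : τ F = ∑ w ∈ hFfin.toFinset, τ {w} := by
    exact (congrArg τ hFcoe).symm.trans (rating_sum_aux τ hτ0 hτadd _)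
  have hmem : ∀ w ∈ hFfin.toFinset, τ {w} + ∑ s ∈ T, s = ∑ s ∈ T, s := by
    intro w hw
    rw [Set.Finite.mem_toFinset] at hw
    have hwL' : w ∈ L' := hFsub hw
    have hτwS : τ {w} ∈ S := by
      by_contra hns
      have hsep := hKsep (τ {w}) hns
      have hwK : w ∈ K (τ {w}) := by
        have h := Set.mem_iInter.1 (Set.mem_iInter.1 hwL' (τ {w}))
        exact h (Finset.mem_univ _)
      have hcontr : w ∈ K (τ {w}) ∩ {v : FreeMonoid A | τ {v} = τ {w}} := ⟨hwK, rfl⟩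
      rw [hsep] at hcontr
      exact hcontr
    apply mem_le_sum_aux hidem
    rw [hTdef, Set.Finite.mem_toFinset]
    exact hτwS
  have h2 : τ L' + ∑ s ∈ T, s = ∑ s ∈ T, s := by
    rw [hFval, hτF]
    exact sum_le_aux _ _ _ hmem
  calc τ L₀ = (∑ s ∈ T, s) + τ L₀ := h1.symm
    _ = τ L₀ + ∑ s ∈ T, s := add_comm _ _
    _ = τ L₀ + (τ L' + ∑ s ∈ T, s) := by rw [h2]
    _ = (τ L₀ + τ L') + ∑ s ∈ T, s := (add_assoc _ _ _).symm
    _ = τ L' + ∑ s ∈ T, s := by rw [hoptL']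
    _ = ∑ s ∈ T, s := h2
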